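/- arXiv:2302.07938 — 3 statements merged into one kernel-verified Lean document; each statement's English description precedes it below -/
import Mathlib

section
/- Consider n agents N = {1,…,n} equipped with a graph distance d : N × N → ℕ, a radius κ ∈ ℕ, and κ-neighborhoods N_i^κ := {j ∈ N : d(i,j) ≤ κ}. Let S = ∏_{j∈N} S_j and A = ∏_{j∈N} A_j be finite products, let γ ∈ [0,1), and fix an agent i. Let ν be a probability distribution on S, and for each j let π_j(θ_j)(· | s_{N_j^κ}) be a positive probability distribution on A_j, differentiable in θ_j and depending on s only through the coordinates in N_j^κ; given s ∼ ν, let a ∼ ∏_j π_j(θ_j)(·|s_{N_j^κ}) (product conditional law). Let ψ_i(a_i | s_{N_i^κ}) := ∇_{θ_i} log π_i(θ_i)(a_i | s_{N_i^κ}) and assume ‖ψ_i(a_i|s_{N_i^κ})‖ ≤ M_ψ for all (s,a). Suppose functions Q_j : S × A → ℝ and Q̂_j : S_{N_j^κ} × A_{N_j^κ} → ℝ (for j ∈ N) satisfy sup_{(s,a)} |Q̂_j(s_{N_j^κ}, a_{N_j^κ}) − Q_j(s,a)| ≤ c₀ φ₀^κ for constants c₀ ≥ 0 and φ₀ ∈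 (0,1). Define g := (1/(1−γ)) · E_{(s,a)}[ ψ_i(a_i|s_{N_i^κ}) · (1/n) ∑_{j∈N} Q_j(s,a) ] and ĝ := (1/(1−γ)) · E_{(s,a)}[ ψ_i(a_i|s_{N_i^κ}) · (1/n) ∑_{j∈N_i^κ} Q̂_j(s_{N_j^κ}, a_{N_j^κ}) ]. Then ‖ĝ − g‖ ≤ c₀ φ₀^κ M_ψ / (1−γ). -/
/-!
The difference `ĝ - g` splits into the terms of the far agents `j ∉ N_i^κ`, which vanish, and an
average of the errors `Q̂_j - Q_j`, which is at most `c₀ φ₀^κ M_ψ`. A far term vanishes because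
`Q̂_j` does not depend on `a_i`, so summing over `a_i` first leaves `∑ π_i ψ_i = ∇ ∑ π_i = ∇ 1 = 0`.
-/

open Finset

section Score

variable {E : Type*} [NormedAddCommGroup E] [InnerProductSpace ℝ E] [CompleteSpace E]

theorem smul_gradient_log {f : E → ℝ} {x : E} (hf : DifferentiableAt ℝ f x) (hx : f x ≠ 0) :
    f x • gradient (fun y => Real.log (f y)) x = gradient f x := by
  simp only [gradient, (hf.hasFDerivAt.log hx).fderiv, map_smul, smul_smul, mul_inv_cancel₀ hx,
    one_smul]

theorem sum_smul_gradient_log_eq_zero {α : Type*} [Fintype α] {p : E → α → ℝ} {x : E}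
    (hdiff : ∀ a, DifferentiableAt ℝ (fun y => p y a) x) (hne : ∀ a, p x a ≠ 0)
    (hsum : ∀ y, ∑ a, p y a = 1) :
    ∑ a, p x a • gradient (fun y => Real.log (p y a)) x = 0 := by
  have hconst : (fun y => ∑ a, p y a) = fun _ => 1 := funext hsum
  simp_rw [smul_gradient_log (hdiff _) (hne _)]
  simp only [gradient, ← map_sum]
  rw [← fderiv_fun_sum fun a _ => hdiff a, hconst, fderiv_fun_const, Pi.zero_apply, map_zero]

end Score

theorem sum_prod_mul_smul_eq_zero {R ι E : Type*} [CommSemiring R] [Fintype ι] [DecidableEq ι]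
    {A : ι → Type*} [∀ k, Fintype (A k)] [AddCommMonoid E] [Module R E]
    (p : ∀ k, A k → R) (i : ι) (f : (∀ k, A k) → R)
    (hf : ∀ a b, (∀ k, k ≠ i → a k = b k) → f a = f b) (v : A i → E)
    (hv : ∑ x, p i x • v x = 0) :
    ∑ a, ((∏ k, p k (a k)) * f a) • v (a i) = 0 := by
  rcases isEmpty_or_nonempty (A i) with hA | ⟨⟨x₀⟩⟩
  · have : IsEmpty (∀ k, A k) := isEmpty_pi.2 ⟨i, hA⟩
    simp
  set e := (Equiv.piSplitAt i A).symm
  have hsplit : ∀ x r, ((∏ k, p k (e (x, r) k)) * f (e (x, r))) • v (e (x, r) i) =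
      ((∏ k : {k // k ≠ i}, p k (r k)) * f (e (x₀, r))) • (p i x • v x) := by
    intro x r
    have hf' : f (e (x, r)) = f (e (x₀, r)) := hf _ _ fun k hk => by simp [e, hk]
    have hr : ∀ k : {k // k ≠ i}, e (x, r) k = r k := fun k => by simp [e, k.2]
    have hx : e (x, r) i = x := by simp [e]
    rw [Fintype.prod_eq_mul_prod_subtype_ne _ i, hf', smul_smul, hx]
    simp only [hr]
    ring_nf
  rw [← e.sum_comp, Fintype.sum_prod_type, sum_comm]
  refine sum_eq_zero fun r _ => ?_
  simp only [hsplit, ← smul_sum, hv, smul_zero]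

section WeightedSums

variable {X J E : Type*} [Fintype X] [Fintype J] [NormedAddCommGroup E] [NormedSpace ℝ E]

theorem sum_mul_sum_smul_eq_of_sum_mul_smul_eq_zero (w : X → ℝ) (c : ℝ) (q : J → X → ℝ)
    (u : X → E) {N : Finset J} (hfar : ∀ j ∉ N, ∑ x, (w x * q j x) • u x = 0) :
    ∑ x, (w x * (c * ∑ j ∈ N, q j x)) • u x = ∑ x, (w x * (c * ∑ j, q j x)) • u x := by
  have hswap : ∀ T : Finset J,
      ∑ x, (w x * (c * ∑ j ∈ T, q j x)) • u x = c • ∑ j ∈ T, ∑ x, (w x * q j x) • u x := by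
    intro T
    simp only [mul_sum, sum_smul, smul_sum, smul_smul]
    rw [sum_comm]
    simp only [mul_left_comm]
  rw [hswap, hswap, sum_subset (subset_univ N) fun j _ hj => hfar j hj]

theorem norm_sum_mul_smul_le {w : X → ℝ} (hw0 : ∀ x, 0 ≤ w x) (hw1 : ∑ x, w x = 1)
    {D : X → ℝ} {u : X → E} {ε M : ℝ} (hD : ∀ x, |D x| ≤ ε) (hu : ∀ x, ‖u x‖ ≤ M) :
    ‖∑ x, (w x * D x) • u x‖ ≤ ε * M := by
  simp only [mul_smul]
  rw [← mem_closedBall_zero_iff]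
  refine (convex_closedBall 0 (ε * M)).sum_mem (fun x _ => hw0 x) hw1 fun x _ => ?_
  rw [mem_closedBall_zero_iff, norm_smul, Real.norm_eq_abs]
  exact mul_le_mul (hD x) (hu x) (norm_nonneg _) ((abs_nonneg _).trans (hD x))

theorem abs_one_div_card_mul_sum_le [Nonempty J] {d : J → ℝ} {ε : ℝ} (hd : ∀ j, |d j| ≤ ε) :
    |(1 / Fintype.card J) * ∑ j, d j| ≤ ε := by
  have hcard : (0 : ℝ) < Fintype.card J := by exact_mod_cast Fintype.card_pos
  rw [abs_mul, abs_of_pos (by positivity), one_div_mul_eq_div, div_le_iff₀ hcard, mul_comm]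
  calc |∑ j, d j| ≤ ∑ j, |d j| := abs_sum_le_sum_abs _ _
    _ ≤ ∑ _j : J, ε := sum_le_sum fun j _ => hd j
    _ = Fintype.card J * ε := by simp

theorem norm_sum_truncated_sub_le [Nonempty J] {w : X → ℝ} (hw0 : ∀ x, 0 ≤ w x)
    (hw1 : ∑ x, w x = 1) {u : X → E} {M : ℝ} (hu : ∀ x, ‖u x‖ ≤ M) {Q Qhat : J → X → ℝ}
    {ε : ℝ} (hQ : ∀ j x, |Qhat j x - Q j x| ≤ ε) {N : Finset J}
    (hfar : ∀ j ∉ N, ∑ x, (w x * Qhat j x) • u x = 0) :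
    ‖∑ x, (w x * ((1 / Fintype.card J) * ∑ j ∈ N, Qhat j x)) • u x -
      ∑ x, (w x * ((1 / Fintype.card J) * ∑ j, Q j x)) • u x‖ ≤ ε * M := by
  rw [sum_mul_sum_smul_eq_of_sum_mul_smul_eq_zero w _ Qhat u hfar, ← sum_sub_distrib]
  simp only [← sub_smul, ← mul_sub, ← sum_sub_distrib]
  exact norm_sum_mul_smul_le hw0 hw1 (fun x => abs_one_div_card_mul_sum_le fun j => hQ j x) hu

end WeightedSums

theorem stmt3_general {n : ℕ}
    (dist : Fin n → Fin n → ℕ) (hdist_symm : ∀ j k, dist j k = dist k j)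
    (κ : ℕ) (i : Fin n)
    (S A : Fin n → Type*) [∀ j, Fintype (S j)] [∀ j, Fintype (A j)]
    (γ : ℝ) (hγ : γ ∈ Set.Ico (0 : ℝ) 1)
    (ν : (∀ k, S k) → ℝ) (hν0 : ∀ s, 0 ≤ ν s) (hν1 : ∑ s, ν s = 1)
    (dp : Fin n → ℕ)
    (θ : ∀ j, EuclideanSpace ℝ (Fin (dp j)))
    (π : ∀ j, EuclideanSpace ℝ (Fin (dp j)) → (∀ k, S k) → A j → ℝ)
    (hπpos : ∀ j θj s aj, 0 < π j θj s aj)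
    (hπsum : ∀ j θj s, ∑ aj, π j θj s aj = 1)
    (hπdiff : ∀ j s aj, Differentiable ℝ (fun θj => π j θj s aj))
    (Mψ c₀ φ₀ : ℝ)
    (ψ : (∀ k, S k) → A i → EuclideanSpace ℝ (Fin (dp i)))
    (hψ : ∀ s ai, ψ s ai = gradient (fun θi => Real.log (π i θi s ai)) (θ i))
    (hψbdd : ∀ s ai, ‖ψ s ai‖ ≤ Mψ)
    (Q Qhat : Fin n → (∀ k, S k) → (∀ k, A k) → ℝ)
    (hQhatloc : ∀ j s a s' a',
      (∀ k, dist j k ≤ κ → s k = s' k ∧ a k = a' k) → Qhat j s a = Qhat j s' a')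
    (hQerr : ∀ j s a, |Qhat j s a - Q j s a| ≤ c₀ * φ₀ ^ κ)
    (g ghat : EuclideanSpace ℝ (Fin (dp i)))
    (hg : g = (1 / (1 - γ)) • ∑ s : ∀ k, S k, ∑ a : ∀ k, A k,
      ((ν s * ∏ j, π j (θ j) s (a j)) * ((1 / (n : ℝ)) * ∑ j, Q j s a)) • ψ s (a i))
    (hghat : ghat = (1 / (1 - γ)) • ∑ s : ∀ k, S k, ∑ a : ∀ k, A k,
      ((ν s * ∏ j, π j (θ j) s (a j)) *
        ((1 / (n : ℝ)) * ∑ j ∈ Finset.univ.filter (fun j => dist i j ≤ κ), Qhat j s a)) •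
          ψ s (a i)) :
    ‖ghat - g‖ ≤ c₀ * φ₀ ^ κ * Mψ / (1 - γ) := by
  have : Nonempty (Fin n) := ⟨i⟩
  have hscore : ∀ s, ∑ ai, π i (θ i) s ai • ψ s ai = 0 := fun s => by
    simp only [hψ]
    exact sum_smul_gradient_log_eq_zero (fun ai => (hπdiff i s ai).differentiableAt)
      (fun ai => (hπpos i _ s ai).ne') (hπsum i · s)
  have hfar : ∀ j ∉ univ.filter (fun j => dist i j ≤ κ),
      ∑ x : (∀ k, S k) × (∀ k, A k),
        ((ν x.1 * ∏ k, π k (θ k) x.1 (x.2 k)) * Qhat j x.1 x.2) • ψ x.1 (x.2 i) = 0 := by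
    intro j hj
    rw [Fintype.sum_prod_type]
    refine sum_eq_zero fun s _ => ?_
    have hloc : ∀ a b : ∀ k, A k, (∀ k, k ≠ i → a k = b k) →
        ν s * Qhat j s a = ν s * Qhat j s b := fun a b hab => by
      refine congrArg _ (hQhatloc j s a s b fun k hk => ⟨rfl, hab k ?_⟩)
      rintro rfl
      exact (mem_filter.not.1 hj) ⟨mem_univ _, hdist_symm k j ▸ hk⟩
    simpa only [mul_left_comm, mul_assoc] using
      sum_prod_mul_smul_eq_zero (fun k => π k (θ k) s) i _ hloc (ψ s) (hscore s)
  have hw1 : ∑ x : (∀ k, S k) × (∀ k, A k), ν x.1 * ∏ k, π k (θ k) x.1 (x.2 k) = 1 := by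
    simp only [Fintype.sum_prod_type, ← mul_sum, ← Fintype.prod_sum, hπsum, prod_const_one,
      mul_one, hν1]
  have hw0 : ∀ x : (∀ k, S k) × (∀ k, A k), 0 ≤ ν x.1 * ∏ k, π k (θ k) x.1 (x.2 k) :=
    fun x => mul_nonneg (hν0 x.1) (prod_nonneg fun k _ => (hπpos k _ _ _).le)
  have hbound := norm_sum_truncated_sub_le hw0 hw1 (u := fun x => ψ x.1 (x.2 i))
    (fun x => hψbdd x.1 (x.2 i)) (Q := fun j x => Q j x.1 x.2) (fun j x => hQerr j x.1 x.2) hfar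
  simp only [Fintype.sum_prod_type, Fintype.card_fin] at hbound
  have hγ' : 0 < 1 - γ := sub_pos.2 hγ.2
  rw [hghat, hg, ← smul_sub, norm_smul, Real.norm_eq_abs, abs_of_pos (by positivity),
    one_div_mul_eq_div, div_le_div_iff_of_pos_right hγ']
  exact hbound

/-- Proposition 1: the truncated policy gradient estimator `ĝ`, which replaces
the local shadow Q-functions `Q_j` by truncated Q-functions `Q̂_j` of agents in
the κ-neighborhood of agent `i` only, approximates the exact policy gradient
component `g = ∇_{θ_i} F(θ)` up to error `c₀ φ₀^κ M_ψ / (1 - γ)`. -/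
theorem stmt3 {n : ℕ} (hn : 0 < n)
    (dist : Fin n → Fin n → ℕ) (hdist_symm : ∀ j k, dist j k = dist k j)
    (κ : ℕ) (i : Fin n)
    (S A : Fin n → Type*) [∀ j, Fintype (S j)] [∀ j, Fintype (A j)]
    (γ : ℝ) (hγ : γ ∈ Set.Ico (0 : ℝ) 1)
    (ν : (∀ k, S k) → ℝ) (hν0 : ∀ s, 0 ≤ ν s) (hν1 : ∑ s, ν s = 1)
    (dp : Fin n → ℕ)
    (θ : ∀ j, EuclideanSpace ℝ (Fin (dp j)))
    (π : ∀ j, EuclideanSpace ℝ (Fin (dp j)) → (∀ k, S k) → A j → ℝ)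
    (hπpos : ∀ j θj s aj, 0 < π j θj s aj)
    (hπsum : ∀ j θj s, ∑ aj, π j θj s aj = 1)
    (hπloc : ∀ j θj s s', (∀ k, dist j k ≤ κ → s k = s' k) → π j θj s = π j θj s')
    (hπdiff : ∀ j s aj, Differentiable ℝ (fun θj => π j θj s aj))
    (Mψ c₀ φ₀ : ℝ) (hMψ : 0 ≤ Mψ) (hc₀ : 0 ≤ c₀) (hφ₀ : φ₀ ∈ Set.Ioo (0 : ℝ) 1)
    (ψ : (∀ k, S k) → A i → EuclideanSpace ℝ (Fin (dp i)))
    (hψ : ∀ s ai, ψ s ai = gradient (fun θi => Real.log (π i θi s ai)) (θ i))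
    (hψbdd : ∀ s ai, ‖ψ s ai‖ ≤ Mψ)
    (Q Qhat : Fin n → (∀ k, S k) → (∀ k, A k) → ℝ)
    (hQhatloc : ∀ j s a s' a',
      (∀ k, dist j k ≤ κ → s k = s' k ∧ a k = a' k) → Qhat j s a = Qhat j s' a')
    (hQerr : ∀ j s a, |Qhat j s a - Q j s a| ≤ c₀ * φ₀ ^ κ)
    (g ghat : EuclideanSpace ℝ (Fin (dp i)))
    (hg : g = (1 / (1 - γ)) • ∑ s : ∀ k, S k, ∑ a : ∀ k, A k,
      ((ν s * ∏ j, π j (θ j) s (a j)) * ((1 / (n : ℝ)) * ∑ j, Q j s a)) • ψ s (a i))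
    (hghat : ghat = (1 / (1 - γ)) • ∑ s : ∀ k, S k, ∑ a : ∀ k, A k,
      ((ν s * ∏ j, π j (θ j) s (a j)) *
        ((1 / (n : ℝ)) * ∑ j ∈ Finset.univ.filter (fun j => dist i j ≤ κ), Qhat j s a)) •
          ψ s (a i)) :
    ‖ghat - g‖ ≤ c₀ * φ₀ ^ κ * Mψ / (1 - γ) :=
  stmt3_general dist hdist_symm κ i S A γ hγ ν hν0 hν1 dp θ π hπpos hπsum hπdiff Mψ c₀ φ₀ ψ hψ hψbdd
    Q Qhat hQhatloc hQerr g ghat hg hghat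
end

section
/- Let F : ℝ^d → ℝ be differentiable with L_θ-Lipschitz gradient (L_θ > 0). Let θ ∈ ℝ^d, g̃ ∈ ℝ^d, and let 0 < η ≤ 1/(4L_θ). Set θ⁺ := θ + η g̃. Then η‖∇F(θ)‖² ≤ 4(F(θ⁺) − F(θ)) + 3η‖∇F(θ) − g̃‖². -/
/-!
The descent lemma gives `F θ⁺ - F θ ≥ η ⟪∇F θ, g̃⟫ - (L η² / 2) ‖g̃‖²`, and `L η ≤ 1/4` turns the
curvature term into `η ‖g̃‖² / 8`. What remains is the pointwise inequality
`‖a‖² + ‖b‖² / 2 ≤ 4 ⟪a, b⟫ + 3 ‖a - b‖²`, whose gap is `2 ‖a - b / 2‖² + 2 ‖b‖²`.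
-/

open scoped Gradient RealInnerProductSpace

section LipschitzGradient

variable {E : Type*} [NormedAddCommGroup E] [InnerProductSpace ℝ E] [CompleteSpace E]
  {F : E → ℝ} {x v : E}

theorem DifferentiableAt.hasDerivAt_comp_add_smul {t : ℝ}
    (hF : DifferentiableAt ℝ F (x + t • v)) :
    HasDerivAt (fun s : ℝ => F (x + s • v)) ⟪∇ F (x + t • v), v⟫ t := by
  have hline : HasDerivAt (fun s : ℝ => x + s • v) v t :=
    ((hasDerivAt_id t).smul_const v).const_add x |>.congr_deriv (one_smul ℝ v)
  have hcomp := hF.hasFDerivAt.comp_hasDerivAt t hline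
  rwa [← inner_gradient_left] at hcomp

/-- The descent lemma, as a lower bound. -/
theorem le_image_add_of_lipschitz_gradient {L : ℝ} (hF : Differentiable ℝ F)
    (hLip : ∀ x y, ‖∇ F x - ∇ F y‖ ≤ L * ‖x - y‖) :
    F x + ⟪∇ F x, v⟫ - L / 2 * ‖v‖ ^ 2 ≤ F (x + v) := by
  set ψ : ℝ → ℝ := fun t => F (x + t • v) - t * ⟪∇ F x, v⟫ + L * ‖v‖ ^ 2 * t ^ 2 / 2
  have hψ : ∀ t, HasDerivAt ψ (⟪∇ F (x + t • v), v⟫ - ⟪∇ F x, v⟫ + L * ‖v‖ ^ 2 * t) t := by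
    intro t
    have hquad : HasDerivAt (fun s : ℝ => L * ‖v‖ ^ 2 * s ^ 2 / 2) (L * ‖v‖ ^ 2 * t) t := by
      refine (((hasDerivAt_pow 2 t).const_mul (L * ‖v‖ ^ 2)).div_const 2).congr_deriv ?_
      norm_num
      ring
    exact (((hF _).hasDerivAt_comp_add_smul).sub (hasDerivAt_mul_const _)).add hquad
  have hslope : ∀ t, 0 ≤ t → ⟪∇ F x, v⟫ - ⟪∇ F (x + t • v), v⟫ ≤ L * ‖v‖ ^ 2 * t := by
    intro t ht
    have hdist : ‖x - (x + t • v)‖ = t * ‖v‖ := by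
      rw [sub_add_cancel_left, norm_neg, norm_smul, Real.norm_of_nonneg ht]
    calc ⟪∇ F x, v⟫ - ⟪∇ F (x + t • v), v⟫ = ⟪∇ F x - ∇ F (x + t • v), v⟫ :=
          (inner_sub_left _ _ _).symm
      _ ≤ ‖∇ F x - ∇ F (x + t • v)‖ * ‖v‖ := real_inner_le_norm _ _
      _ ≤ L * (t * ‖v‖) * ‖v‖ := by
          gcongr
          exact hdist ▸ hLip _ _
      _ = L * ‖v‖ ^ 2 * t := by ring
  have hmono : MonotoneOn ψ (Set.Ici 0) := by
    refine monotoneOn_of_hasDerivWithinAt_nonneg (convex_Ici 0)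
      (fun t _ => (hψ t).continuousAt.continuousWithinAt)
      (fun t _ => (hψ t).hasDerivWithinAt) fun t ht => ?_
    rw [interior_Ici] at ht
    linarith [hslope t ht.le]
  have h01 := hmono Set.self_mem_Ici (Set.mem_Ici.2 zero_le_one) zero_le_one
  simp only [ψ, zero_smul, add_zero, one_smul, zero_mul, sub_zero, one_mul, one_pow,
    mul_one, ne_eq, OfNat.ofNat_ne_zero, not_false_eq_true, zero_pow, mul_zero, zero_div] at h01
  linarith

end LipschitzGradient

theorem norm_sq_add_norm_sq_div_two_le_four_inner_add_three_norm_sub_sq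
    {E : Type*} [NormedAddCommGroup E] [InnerProductSpace ℝ E] (a b : E) :
    ‖a‖ ^ 2 + ‖b‖ ^ 2 / 2 ≤ 4 * ⟪a, b⟫ + 3 * ‖a - b‖ ^ 2 := by
  have hab := norm_sub_sq_real a b
  have hhalf := norm_sub_sq_real a ((1 / 2 : ℝ) • b)
  rw [real_inner_smul_right, norm_smul, mul_pow, Real.norm_of_nonneg (by norm_num)] at hhalf
  linarith [sq_nonneg ‖a - (1 / 2 : ℝ) • b‖, sq_nonneg ‖b‖]

/-- Single-step inexact gradient-ascent inequality (key estimate in the proof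
of Theorem 1): for `F` with `Lθ`-Lipschitz gradient, `0 < η ≤ 1/(4Lθ)` and
`θ⁺ = θ + η g̃`, one has `η‖∇F(θ)‖² ≤ 4(F(θ⁺) − F(θ)) + 3η‖∇F(θ) − g̃‖²`. -/
theorem stmt4 {d : ℕ} (F : EuclideanSpace ℝ (Fin d) → ℝ) (Lθ : ℝ) (hLθ : 0 < Lθ)
    (hF : Differentiable ℝ F)
    (hLip : ∀ x y, ‖gradient F x - gradient F y‖ ≤ Lθ * ‖x - y‖)
    (θ gt : EuclideanSpace ℝ (Fin d)) (η : ℝ) (hη : 0 < η) (hη' : η ≤ 1 / (4 * Lθ)) :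
    η * ‖gradient F θ‖ ^ 2 ≤
      4 * (F (θ + η • gt) - F θ) + 3 * η * ‖gradient F θ - gt‖ ^ 2 := by
  have hdescent := le_image_add_of_lipschitz_gradient (x := θ) (v := η • gt) hF hLip
  rw [real_inner_smul_right, norm_smul, mul_pow, Real.norm_of_nonneg hη.le] at hdescent
  have hstep : Lθ * η ≤ 1 / 4 := by
    rw [le_div_iff₀ (by positivity)] at hη'
    linarith
  have hcurv : Lθ * η * (η * ‖gt‖ ^ 2) ≤ 1 / 4 * (η * ‖gt‖ ^ 2) :=
    mul_le_mul_of_nonneg_right hstep (by positivity)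
  have hkey := norm_sq_add_norm_sq_div_two_le_four_inner_add_three_norm_sub_sq (∇ F θ) gt
  linarith [mul_le_mul_of_nonneg_left hkey hη.le]
end

section
/- Let X be a finite set, γ ∈ [0,1), and let P, P̂ ∈ ℝ^{X×X} be row-stochastic matrices such that ∑_{y} |P(x,y) − P̂(x,y)| ≤ ε for all x ∈ X. Let ξ be a probability distribution on X, and define the discounted occupancy measures λ := ∑_{k=0}^∞ γ^k ξP^k and λ̂ := ∑_{k=0}^∞ γ^k ξP̂^k. Then ‖λ − λ̂‖₁ ≤ εγ/(1−γ)² ≤ ε/(1−γ)². -/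
open Matrix Finset

/-- ℓ₁ contraction of a row-stochastic matrix acting on the right. -/
lemma aux_l1_vecMul {X : Type*} [Fintype X] (P : Matrix X X ℝ)
    (hP0 : ∀ x y, 0 ≤ P x y) (hP1 : ∀ x, ∑ y, P x y = 1) (v : X → ℝ) :
    ∑ y, |Matrix.vecMul v P y| ≤ ∑ x, |v x| := by
  calc ∑ y, |Matrix.vecMul v P y| ≤ ∑ y, ∑ x, |v x| * P x y := by
        refine Finset.sum_le_sum fun y _ => ?_
        refine (Finset.abs_sum_le_sum_abs _ _).trans ?_
        refine Finset.sum_le_sum fun x _ => ?_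
        rw [abs_mul, abs_of_nonneg (hP0 x y)]
    _ = ∑ x, |v x| * ∑ y, P x y := by
        rw [Finset.sum_comm]; simp [Finset.mul_sum]
    _ = ∑ x, |v x| := by simp [hP1]

/-- Propagation of ℓ₁ error under one perturbed kernel step. -/
lemma aux_step {X : Type*} [Fintype X] (P Phat : Matrix X X ℝ)
    (hP0 : ∀ x y, 0 ≤ P x y) (hP1 : ∀ x, ∑ y, P x y = 1)
    (ε : ℝ) (hrow : ∀ x, ∑ y, |P x y - Phat x y| ≤ ε)
    (a b : X → ℝ) (hb0 : ∀ x, 0 ≤ b x) (hb1 : ∑ x, b x = 1) :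
    ∑ y, |Matrix.vecMul a P y - Matrix.vecMul b Phat y|
      ≤ (∑ x, |a x - b x|) + ε := by
  have key : ∀ y, Matrix.vecMul a P y - Matrix.vecMul b Phat y
      = Matrix.vecMul (a - b) P y + ∑ x, b x * (P x y - Phat x y) := by
    intro y
    simp only [Matrix.vecMul, dotProduct, Pi.sub_apply]
    rw [← Finset.sum_add_distrib, ← Finset.sum_sub_distrib]
    congr 1; ext x; ring
  calc ∑ y, |Matrix.vecMul a P y - Matrix.vecMul b Phat y|
      ≤ ∑ y, (|Matrix.vecMul (a - b) P y| + |∑ x, b x * (P x y - Phat x y)|) := by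
        refine Finset.sum_le_sum fun y _ => ?_
        rw [key y]; exact abs_add_le _ _
    _ = (∑ y, |Matrix.vecMul (a - b) P y|) + ∑ y, |∑ x, b x * (P x y - Phat x y)| :=
        Finset.sum_add_distrib
    _ ≤ (∑ x, |a x - b x|) + ε := by
        refine add_le_add ?_ ?_
        · simpa using aux_l1_vecMul P hP0 hP1 (a - b)
        · calc ∑ y, |∑ x, b x * (P x y - Phat x y)|
              ≤ ∑ y, ∑ x, b x * |P x y - Phat x y| := by
                refine Finset.sum_le_sum fun y _ => ?_
                refine (Finset.abs_sum_le_sum_abs _ _).trans ?_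
                refine Finset.sum_le_sum fun x _ => ?_
                rw [abs_mul, abs_of_nonneg (hb0 x)]
            _ = ∑ x, b x * ∑ y, |P x y - Phat x y| := by
                rw [Finset.sum_comm]; simp [Finset.mul_sum]
            _ ≤ ∑ x, b x * ε :=
                Finset.sum_le_sum fun x _ =>
                  mul_le_mul_of_nonneg_left (hrow x) (hb0 x)
            _ = ε := by rw [← Finset.sum_mul, hb1, one_mul]

/-- Kernel-level form of Lemma 3: if two row-stochastic kernels have rows within
`ε` in ℓ₁, the corresponding discounted occupancy measures satisfy
`‖λ − λ̂‖₁ ≤ εγ/(1−γ)² ≤ ε/(1−γ)²`. -/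
theorem stmt13 {X : Type*} [Fintype X] [DecidableEq X]
    (γ : ℝ) (hγ0 : 0 ≤ γ) (hγ1 : γ < 1)
    (P Phat : Matrix X X ℝ)
    (hP0 : ∀ x y, 0 ≤ P x y) (hP1 : ∀ x, ∑ y, P x y = 1)
    (hPhat0 : ∀ x y, 0 ≤ Phat x y) (hPhat1 : ∀ x, ∑ y, Phat x y = 1)
    (ε : ℝ) (hrow : ∀ x, ∑ y, |P x y - Phat x y| ≤ ε)
    (ξ : X → ℝ) (hξ0 : ∀ x, 0 ≤ ξ x) (hξ1 : ∑ x, ξ x = 1)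
    (lam lamhat : X → ℝ)
    (hlam : lam = ∑' k : ℕ, γ ^ k • Matrix.vecMul ξ (P ^ k))
    (hlamhat : lamhat = ∑' k : ℕ, γ ^ k • Matrix.vecMul ξ (Phat ^ k)) :
    ∑ x, |lam x - lamhat x| ≤ ε * γ / (1 - γ) ^ 2 ∧
      ε * γ / (1 - γ) ^ 2 ≤ ε / (1 - γ) ^ 2 := by
  -- X is nonempty
  have hXne : Nonempty X := by
    by_contra h
    rw [not_nonempty_iff] at h
    simp [Finset.univ_eq_empty] at hξ1
  obtain ⟨x₀⟩ := hXne
  have hε0 : 0 ≤ ε :=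
    le_trans (Finset.sum_nonneg fun y _ => abs_nonneg _) (hrow x₀)
  set a : ℕ → X → ℝ := fun k => Matrix.vecMul ξ (P ^ k) with ha
  set b : ℕ → X → ℝ := fun k => Matrix.vecMul ξ (Phat ^ k) with hb
  -- basic recursions
  have hastep : ∀ k, a (k + 1) = Matrix.vecMul (a k) P := by
    intro k; simp [ha, pow_succ, ← Matrix.vecMul_vecMul]
  have hbstep : ∀ k, b (k + 1) = Matrix.vecMul (b k) Phat := by
    intro k; simp [hb, pow_succ, ← Matrix.vecMul_vecMul]
  -- nonnegativity and normalization of a, b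
  have prob : ∀ (Q : Matrix X X ℝ), (∀ x y, 0 ≤ Q x y) → (∀ x, ∑ y, Q x y = 1) →
      ∀ k, (∀ x, 0 ≤ Matrix.vecMul ξ (Q ^ k) x) ∧
        ∑ x, Matrix.vecMul ξ (Q ^ k) x = 1 := by
    intro Q hQ0 hQ1 k
    induction k with
    | zero =>
      simp only [pow_zero, Matrix.vecMul_one]
      exact ⟨hξ0, hξ1⟩
    | succ k ih =>
      have hs : Matrix.vecMul ξ (Q ^ (k + 1)) =
          Matrix.vecMul (Matrix.vecMul ξ (Q ^ k)) Q := by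
        simp [pow_succ, ← Matrix.vecMul_vecMul]
      constructor
      · intro x
        rw [hs]
        exact Finset.sum_nonneg fun z _ => mul_nonneg (ih.1 z) (hQ0 z x)
      · rw [hs]
        simp only [Matrix.vecMul, dotProduct]
        rw [Finset.sum_comm]
        calc ∑ z, ∑ x, Matrix.vecMul ξ (Q ^ k) z * Q z x
            = ∑ z, Matrix.vecMul ξ (Q ^ k) z * ∑ x, Q z x := by
              simp [Finset.mul_sum]
          _ = 1 := by simp [hQ1, ih.2]
  have haP := prob P hP0 hP1
  have hbP := prob Phat hPhat0 hPhat1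
  -- key induction: ℓ₁ distance grows by at most ε per step
  have hdist : ∀ k, ∑ x, |a k x - b k x| ≤ k * ε := by
    intro k
    induction k with
    | zero => simp [ha, hb, Matrix.vecMul]
    | succ k ih =>
      rw [hastep, hbstep]
      calc ∑ y, |Matrix.vecMul (a k) P y - Matrix.vecMul (b k) Phat y|
          ≤ (∑ x, |a k x - b k x|) + ε :=
            aux_step P Phat hP0 hP1 ε hrow (a k) (b k) (hbP k).1 (hbP k).2
        _ ≤ k * ε + ε := by linarith
        _ = (k + 1 : ℕ) * ε := by push_cast; ring
  -- bounds |a k x| ≤ 1 etc.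
  have habd : ∀ k x, |a k x| ≤ 1 := by
    intro k x
    rw [abs_of_nonneg ((haP k).1 x)]
    calc a k x ≤ ∑ z, a k z :=
          Finset.single_le_sum (fun z _ => (haP k).1 z) (Finset.mem_univ x)
      _ = 1 := (haP k).2
  have hbbd : ∀ k x, |b k x| ≤ 1 := by
    intro k x
    rw [abs_of_nonneg ((hbP k).1 x)]
    calc b k x ≤ ∑ z, b k z :=
          Finset.single_le_sum (fun z _ => (hbP k).1 z) (Finset.mem_univ x)
      _ = 1 := (hbP k).2
  have hgeom : Summable (fun k : ℕ => γ ^ k) :=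
    summable_geometric_of_lt_one hγ0 hγ1
  have hsummb : ∀ (c : ℕ → X → ℝ), (∀ k x, |c k x| ≤ 1) →
      ∀ x, Summable (fun k : ℕ => γ ^ k * c k x) := by
    intro c hc x
    refine Summable.of_abs (hgeom.of_nonneg_of_le (fun k => abs_nonneg _) fun k => ?_)
    rw [abs_mul, abs_pow, abs_of_nonneg hγ0]
    calc γ ^ k * |c k x| ≤ γ ^ k * 1 :=
          mul_le_mul_of_nonneg_left (hc k x) (pow_nonneg hγ0 k)
      _ = γ ^ k := mul_one _
  have hsa : Summable (fun k : ℕ => γ ^ k • a k) :=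
    Pi.summable.2 fun x => by simpa [smul_eq_mul] using hsummb a habd x
  have hsb : Summable (fun k : ℕ => γ ^ k • b k) :=
    Pi.summable.2 fun x => by simpa [smul_eq_mul] using hsummb b hbbd x
  have hlamx : ∀ x, lam x = ∑' k : ℕ, γ ^ k * a k x := by
    intro x
    rw [hlam, tsum_apply hsa]
    simp [smul_eq_mul]
  have hlamhatx : ∀ x, lamhat x = ∑' k : ℕ, γ ^ k * b k x := by
    intro x
    rw [hlamhat, tsum_apply hsb]
    simp [smul_eq_mul]
  -- summability of the differences
  have hsd : ∀ x, Summable (fun k : ℕ => γ ^ k * (a k x - b k x)) := by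
    intro x
    simpa [mul_sub] using (hsummb a habd x).sub (hsummb b hbbd x)
  have hsdabs : ∀ x, Summable (fun k : ℕ => |γ ^ k * (a k x - b k x)|) :=
    fun x => (hsd x).abs
  have hmaj : Summable (fun k : ℕ => (k : ℝ) * γ ^ k * ε) := by
    have := (summable_pow_mul_geometric_of_norm_lt_one (R := ℝ) 1
      (by rwa [Real.norm_eq_abs, abs_of_nonneg hγ0])).mul_right ε
    simpa using this
  constructor
  · have step1 : ∑ x, |lam x - lamhat x|
        ≤ ∑ x, ∑' k : ℕ, |γ ^ k * (a k x - b k x)| := by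
      refine Finset.sum_le_sum fun x _ => ?_
      rw [hlamx x, hlamhatx x, ← Summable.tsum_sub (hsummb a habd x) (hsummb b hbbd x)]
      have : (fun k : ℕ => γ ^ k * a k x - γ ^ k * b k x)
          = fun k : ℕ => γ ^ k * (a k x - b k x) := by ext k; ring
      rw [this]
      simpa only [Real.norm_eq_abs] using norm_tsum_le_tsum_norm
        (f := fun k : ℕ => γ ^ k * (a k x - b k x))
        (by simpa only [Real.norm_eq_abs] using hsdabs x)
    have step2 : ∑ x, ∑' k : ℕ, |γ ^ k * (a k x - b k x)|
        = ∑' k : ℕ, ∑ x, |γ ^ k * (a k x - b k x)| :=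
      (Summable.tsum_finsetSum fun x _ => hsdabs x).symm
    have step3 : ∑' k : ℕ, ∑ x, |γ ^ k * (a k x - b k x)|
        ≤ ∑' k : ℕ, (k : ℝ) * γ ^ k * ε := by
      refine Summable.tsum_le_tsum (fun k => ?_) ?_ hmaj
      · calc ∑ x, |γ ^ k * (a k x - b k x)|
            = γ ^ k * ∑ x, |a k x - b k x| := by
              rw [Finset.mul_sum]
              refine Finset.sum_congr rfl fun x _ => ?_
              rw [abs_mul, abs_pow, abs_of_nonneg hγ0]
          _ ≤ γ ^ k * (k * ε) :=
              mul_le_mul_of_nonneg_left (hdist k) (pow_nonneg hγ0 k)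
          _ = (k : ℝ) * γ ^ k * ε := by ring
      · refine Summable.of_nonneg_of_le (fun k => Finset.sum_nonneg fun x _ => abs_nonneg _)
          (fun k => ?_) hmaj
        calc ∑ x, |γ ^ k * (a k x - b k x)|
            = γ ^ k * ∑ x, |a k x - b k x| := by
              rw [Finset.mul_sum]
              refine Finset.sum_congr rfl fun x _ => ?_
              rw [abs_mul, abs_pow, abs_of_nonneg hγ0]
          _ ≤ γ ^ k * (k * ε) :=
              mul_le_mul_of_nonneg_left (hdist k) (pow_nonneg hγ0 k)
          _ = (k : ℝ) * γ ^ k * ε := by ring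
    have step4 : ∑' k : ℕ, (k : ℝ) * γ ^ k * ε = ε * γ / (1 - γ) ^ 2 := by
      have h := tsum_coe_mul_geometric_of_norm_lt_one (𝕜 := ℝ)
        (by rwa [Real.norm_eq_abs, abs_of_nonneg hγ0] : ‖γ‖ < 1)
      calc ∑' k : ℕ, (k : ℝ) * γ ^ k * ε = (∑' k : ℕ, (k : ℝ) * γ ^ k) * ε :=
            tsum_mul_right
        _ = γ / (1 - γ) ^ 2 * ε := by rw [h]
        _ = ε * γ / (1 - γ) ^ 2 := by ring
    linarith [step1, step2 ▸ step1, step3, step4]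
  · have h2 : (0:ℝ) < (1 - γ) ^ 2 := pow_pos (by linarith) 2
    have h3 : ε * γ ≤ ε := by nlinarith
    rw [div_le_div_iff₀ h2 h2]
    nlinarith
end
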